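/- Let φ ∈ F. Then for each k ∈ ℕ there exist a constant C_k ≥ 0 and a finite set Λ of the seminorms {‖·‖_m} ∪ {p_m} such that the unique solution x of the infinite-delay equation satisfies sup_{s∈[0,kτ₁]} |x(s)| ≤ C_k · max{q(φ) : q ∈ Λ}. -/

import Mathlib

/-!
Split the series at `N = n(k)`. On `[0, kτ₁]` every delayed argument `t - τᵢ` with `i ≥ N` is
non-positive, so the tail only sees the initial function and is bounded by `p_k(φ)`; the finitely
many remaining delays are at least `τ₁`, so on `[0, (j+1)τ₁]` they only see `x` on
`[-m, jτ₁]` with `m ≥ τ_N`. Grönwall's inequality then propagates a bound `C_j Q` on `[-m, jτ₁]`,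
`Q = max ‖φ‖_m p_k(φ)`, to a bound `C_{j+1} Q` on `[-m, (j+1)τ₁]`, starting from `C_0 = 1`.
-/

open Filter Set

/-- sup_{s ∈ [0, kτ₁]} |b_i φ(s − τ_i)|  (τ₁ = τ 0 with ℕ-indexing). -/
noncomputable def pTerm (b τ : ℕ → ℝ) (φ : ℝ → ℝ) (k i : ℕ) : ℝ :=
  ⨆ s : Set.Icc (0:ℝ) ((k : ℝ) * τ 0), |b i * φ ((s : ℝ) - τ i)|

/-- The seminorm p_k(φ) = Σ_{i ≥ n(k)} sup_{s ∈ [0,kτ₁]} |b_i φ(s − τ_i)|. -/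
noncomputable def pSemi (b τ : ℕ → ℝ) (n : ℕ → ℕ) (φ : ℝ → ℝ) (k : ℕ) : ℝ :=
  ∑' i : ℕ, pTerm b τ φ k (n k + i)

/-- The seminorm ‖φ‖_k = sup_{θ ∈ [−k,0]} |φ(θ)|. -/
noncomputable def normSemi (φ : ℝ → ℝ) (k : ℕ) : ℝ :=
  ⨆ θ : Set.Icc (-(k:ℝ)) (0:ℝ), |φ (θ : ℝ)|

/-- n(k) is the smallest natural number such that τ_i ≥ kτ₁ for all i ≥ n(k). -/
def nSpec (τ : ℕ → ℝ) (n : ℕ → ℕ) : Prop :=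
  ∀ k : ℕ, (∀ i, n k ≤ i → (k : ℝ) * τ 0 ≤ τ i) ∧
    ∀ m : ℕ, (∀ i, m ≤ i → (k : ℝ) * τ 0 ≤ τ i) → n k ≤ m

/-- Membership in the Fréchet space F: φ is continuous on (-∞,0] and
p_k(φ) < ∞ (i.e. the defining series is summable) for every k. -/
def memF (b τ : ℕ → ℝ) (n : ℕ → ℕ) (φ : ℝ → ℝ) : Prop :=
  ContinuousOn φ (Set.Iic 0) ∧
    ∀ k : ℕ, Summable fun i => pTerm b τ φ k (n k + i)

/-- A solution of the infinite-delay equation with initial function φ. -/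
def IsSolution (a : ℝ) (b τ : ℕ → ℝ) (φ x : ℝ → ℝ) : Prop :=
  Continuous x ∧ (∀ θ ≤ (0:ℝ), x θ = φ θ) ∧
  (∀ t ≥ (0:ℝ), Summable fun i => b i * x (t - τ i)) ∧
  (∀ t ≥ (0:ℝ), HasDerivWithinAt x (a * x t + ∑' i, b i * x (t - τ i)) (Set.Ici 0) t) ∧
  ContinuousOn (fun t => a * x t + ∑' i, b i * x (t - τ i)) (Set.Ici 0)

theorem IsCompact.le_ciSup_of_continuousOn {α : Type*} [TopologicalSpace α] {K : Set α}
    (hK : IsCompact K) {f : α → ℝ} (hf : ContinuousOn f K) {s : α} (hs : s ∈ K) :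
    f s ≤ ⨆ t : K, f t :=
  le_ciSup (by rw [← image_eq_range]; exact hK.bddAbove_image hf) (⟨s, hs⟩ : K)

theorem gronwallBound_mul (δ K ε r x : ℝ) :
    gronwallBound (δ * r) K (ε * r) x = gronwallBound δ K ε x * r := by
  unfold gronwallBound
  split_ifs <;> ring

theorem le_gronwallBound {δ K ε x : ℝ} (hδ : 0 ≤ δ) (hε : 0 ≤ ε) (hK : 0 ≤ K) (hx : 0 ≤ x) :
    δ ≤ gronwallBound δ K ε x := by
  simpa only [gronwallBound_x0] using gronwallBound_mono hδ hε hK hx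

variable {a : ℝ} {b τ : ℕ → ℝ} {n : ℕ → ℕ} {φ x : ℝ → ℝ} {k m : ℕ}

theorem normSemi_nonneg : 0 ≤ normSemi φ m :=
  Real.iSup_nonneg fun _ => abs_nonneg _

theorem pTerm_nonneg (i : ℕ) : 0 ≤ pTerm b τ φ k i :=
  Real.iSup_nonneg fun _ => abs_nonneg _

theorem pSemi_nonneg : 0 ≤ pSemi b τ n φ k :=
  tsum_nonneg fun _ => pTerm_nonneg _

theorem abs_le_normSemi (hφ : ContinuousOn φ (Iic 0)) {θ : ℝ} (hθ : θ ∈ Icc (-(m : ℝ)) 0) :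
    |φ θ| ≤ normSemi φ m :=
  isCompact_Icc.le_ciSup_of_continuousOn (hφ.mono Icc_subset_Iic_self).abs hθ

theorem abs_mul_le_pTerm (hφ : ContinuousOn φ (Iic 0)) {i : ℕ} (hi : (k : ℝ) * τ 0 ≤ τ i)
    {s : ℝ} (hs : s ∈ Icc 0 ((k : ℝ) * τ 0)) : |b i * φ (s - τ i)| ≤ pTerm b τ φ k i := by
  have hmaps : MapsTo (· - τ i) (Icc 0 ((k : ℝ) * τ 0)) (Iic 0) :=
    fun u hu => sub_nonpos.2 (hu.2.trans hi)
  exact isCompact_Icc.le_ciSup_of_continuousOn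
    (continuousOn_const.mul (hφ.comp (continuous_sub_right _).continuousOn hmaps)).abs hs

theorem abs_tsum_tail_le_pSemi (hφ : memF b τ n φ) (hnk : ∀ i, n k ≤ i → (k : ℝ) * τ 0 ≤ τ i)
    (hxφ : ∀ θ ≤ (0 : ℝ), x θ = φ θ) {t : ℝ} (ht : t ∈ Icc 0 ((k : ℝ) * τ 0)) :
    |∑' i, b (i + n k) * x (t - τ (i + n k))| ≤ pSemi b τ n φ k := by
  rw [← Real.norm_eq_abs]
  refine tsum_of_norm_bounded (hφ.2 k).hasSum fun i => ?_
  have hi := hnk (n k + i) (Nat.le_add_right _ _)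
  rw [Real.norm_eq_abs, add_comm i, hxφ _ (sub_nonpos.2 (ht.2.trans hi))]
  exact abs_mul_le_pTerm hφ.1 hi ht

theorem abs_rhs_le (hφ : memF b τ n φ) (hnk : ∀ i, n k ≤ i → (k : ℝ) * τ 0 ≤ τ i)
    (hxφ : ∀ θ ≤ (0 : ℝ), x θ = φ θ) {t R : ℝ} (ht : t ∈ Icc 0 ((k : ℝ) * τ 0))
    (hsum : Summable fun i => b i * x (t - τ i)) (hR : ∀ i < n k, |x (t - τ i)| ≤ R) :
    |a * x t + ∑' i, b i * x (t - τ i)|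
      ≤ |a| * |x t| + ((∑ i ∈ Finset.range (n k), |b i|) * R + pSemi b τ n φ k) := by
  have hhead : |∑ i ∈ Finset.range (n k), b i * x (t - τ i)|
      ≤ (∑ i ∈ Finset.range (n k), |b i|) * R := by
    rw [Finset.sum_mul]
    refine (Finset.abs_sum_le_sum_abs _ _).trans (Finset.sum_le_sum fun i hi => ?_)
    rw [abs_mul]
    exact mul_le_mul_of_nonneg_left (hR i (Finset.mem_range.1 hi)) (abs_nonneg _)
  rw [← hsum.sum_add_tsum_nat_add (n k), ← abs_mul]
  calc _ ≤ |a * x t| + (|∑ i ∈ Finset.range (n k), b i * x (t - τ i)|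
          + |∑' i, b (i + n k) * x (t - τ (i + n k))|) :=
        (abs_add_le _ _).trans (add_le_add_right (abs_add_le _ _) _)
    _ ≤ _ := by gcongr; exact abs_tsum_tail_le_pSemi hφ hnk hxφ ht

theorem abs_delayed_le_of_history (hτ : Monotone τ) (hτpos : ∀ i, 0 < τ i) (hm : τ (n k) ≤ m)
    {R : ℝ} {j : ℕ} (hR : ∀ s ∈ Icc (-(m : ℝ)) (min (j * τ 0) (k * τ 0)), |x s| ≤ R)
    {t : ℝ} (ht0 : 0 ≤ t) (ht : t ≤ min ((j + 1 : ℕ) * τ 0) (k * τ 0)) {i : ℕ} (hi : i < n k) :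
    |x (t - τ i)| ≤ R := by
  have h0i : τ 0 ≤ τ i := hτ (Nat.zero_le i)
  have him : τ i ≤ m := (hτ hi.le).trans hm
  have htj := ht.trans (min_le_left _ _)
  have htk := ht.trans (min_le_right _ _)
  push_cast at htj
  exact hR _ ⟨by linarith, le_min (by linarith) (by linarith [hτpos i])⟩

theorem exists_abs_le_mul_succ (hτ : Monotone τ) (hτpos : ∀ i, 0 < τ i)
    (hnk : ∀ i, n k ≤ i → (k : ℝ) * τ 0 ≤ τ i) (hm : τ (n k) ≤ m) (hφ : memF b τ n φ)
    (hx : IsSolution a b τ φ x) {Q C : ℝ} (hpQ : pSemi b τ n φ k ≤ Q) (hC0 : 0 ≤ C) {j : ℕ}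
    (hC : ∀ s ∈ Icc (-(m : ℝ)) (min (j * τ 0) (k * τ 0)), |x s| ≤ C * Q) :
    ∃ C' : ℝ, 0 ≤ C' ∧
      ∀ s ∈ Icc (-(m : ℝ)) (min ((j + 1 : ℕ) * τ 0) (k * τ 0)), |x s| ≤ C' * Q := by
  obtain ⟨hxcont, hxφ, hxsum, hxderiv, -⟩ := hx
  have hQ : 0 ≤ Q := pSemi_nonneg.trans hpQ
  have hT : (0 : ℝ) ≤ k * τ 0 := mul_nonneg k.cast_nonneg (hτpos 0).le
  set B := ∑ i ∈ Finset.range (n k), |b i|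
  have hB : 0 ≤ B := Finset.sum_nonneg fun i _ => abs_nonneg _
  set C' := gronwallBound C |a| (B * C + 1) (k * τ 0)
  have hCC' : C ≤ C' := le_gronwallBound hC0 (by positivity) (abs_nonneg a) hT
  refine ⟨C', hC0.trans hCC', fun s hs => ?_⟩
  have hjT : 0 ≤ min ((j : ℝ) * τ 0) (k * τ 0) := le_min (mul_nonneg j.cast_nonneg (hτpos 0).le) hT
  rcases le_or_gt s 0 with hs0 | hs0
  · exact (hC s ⟨hs.1, hs0.trans hjT⟩).trans (mul_le_mul_of_nonneg_right hCC' hQ)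
  have hx0 : |x 0| ≤ C * Q := hC 0 ⟨by simp, hjT⟩
  have hhist : ∀ t ∈ Ico 0 s, ∀ i < n k, |x (t - τ i)| ≤ C * Q :=
    fun t ht i hi => abs_delayed_le_of_history hτ hτpos hm hC ht.1 (ht.2.le.trans hs.2) hi
  have hderiv : ∀ t ∈ Ico 0 s,
      ‖a * x t + ∑' i, b i * x (t - τ i)‖ ≤ |a| * ‖x t‖ + (B * C + 1) * Q := by
    intro t ht
    have htT : t ∈ Icc 0 ((k : ℝ) * τ 0) := ⟨ht.1, (ht.2.le.trans hs.2).trans (min_le_right _ _)⟩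
    simp only [Real.norm_eq_abs]
    refine (abs_rhs_le hφ hnk hxφ htT (hxsum t ht.1) (hhist t ht)).trans ?_
    linarith
  have hgron := norm_le_gronwallBound_of_norm_deriv_right_le hxcont.continuousOn
    (fun t ht => (hxderiv t ht.1).mono (Ici_subset_Ici.2 ht.1)) hx0 hderiv s ⟨hs0.le, le_rfl⟩
  calc |x s| ≤ gronwallBound (C * Q) |a| ((B * C + 1) * Q) (s - 0) := hgron
    _ ≤ gronwallBound (C * Q) |a| ((B * C + 1) * Q) (k * τ 0) :=
      gronwallBound_mono (by positivity) (by positivity) (abs_nonneg a)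
        (by linarith [hs.2.trans (min_le_right _ _)])
    _ = C' * Q := gronwallBound_mul _ _ _ _ _

theorem exists_abs_le_mul (hτ : Monotone τ) (hτpos : ∀ i, 0 < τ i)
    (hnk : ∀ i, n k ≤ i → (k : ℝ) * τ 0 ≤ τ i) (hm : τ (n k) ≤ m) (hφ : memF b τ n φ)
    (hx : IsSolution a b τ φ x) {Q : ℝ} (hφQ : normSemi φ m ≤ Q) (hpQ : pSemi b τ n φ k ≤ Q)
    (j : ℕ) : ∃ C : ℝ, 0 ≤ C ∧ ∀ s ∈ Icc (-(m : ℝ)) (min (j * τ 0) (k * τ 0)), |x s| ≤ C * Q := by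
  induction j with
  | zero =>
    refine ⟨1, zero_le_one, fun s hs => ?_⟩
    have hs0 : s ≤ 0 := by simpa using hs.2.trans (min_le_left _ _)
    rw [one_mul, hx.2.1 s hs0]
    exact (abs_le_normSemi hφ.1 ⟨hs.1, hs0⟩).trans hφQ
  | succ j ih =>
    obtain ⟨C, hC0, hC⟩ := ih
    exact exists_abs_le_mul_succ hτ hτpos hnk hm hφ hx hpQ hC0 hC

/-- Seminorm indices: `(m, true)` stands for `‖·‖_m` and `(m, false)` for `p_m`. -/
theorem solution_seminorm_estimate_general (a : ℝ) (b τ : ℕ → ℝ) (n : ℕ → ℕ)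
    (hτ : StrictMono τ) (hτpos : ∀ i, 0 < τ i)
    (hn : nSpec τ n)
    (φ : ℝ → ℝ) (hφ : memF b τ n φ)
    (x : ℝ → ℝ) (hx : IsSolution a b τ φ x) (k : ℕ) :
    ∃ C : ℝ, 0 ≤ C ∧ ∃ (Λ : Finset (ℕ × Bool)) (hΛ : Λ.Nonempty),
      ∀ s ∈ Set.Icc (0:ℝ) ((k : ℝ) * τ 0),
        |x s| ≤ C * Λ.sup' hΛ (fun q =>
          if q.2 then normSemi φ q.1 else pSemi b τ n φ q.1) := by
  set m := ⌈τ (n k)⌉₊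
  set Q := max (normSemi φ m) (pSemi b τ n φ k)
  obtain ⟨C, hC0, hC⟩ := exists_abs_le_mul hτ.monotone hτpos (hn k).1 (Nat.le_ceil _) hφ hx
    (le_max_left _ _) (le_max_right _ _) k
  refine ⟨C, hC0, {(m, true), (k, false)}, Finset.insert_nonempty _ _, fun s hs => ?_⟩
  have hsup : Finset.sup' {(m, true), (k, false)} (Finset.insert_nonempty _ _)
      (fun q => if q.2 then normSemi φ q.1 else pSemi b τ n φ q.1) = Q := by
    simp [Finset.sup'_insert, Q]
  rw [hsup]
  exact hC s ⟨by linarith [hs.1, m.cast_nonneg (α := ℝ)], by simpa using hs.2⟩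

/-- For φ ∈ F and each k there are C_k ≥ 0 and a finite set Λ of the
seminorms {‖·‖_m} ∪ {p_m} (encoded by indices (m, true) ↦ ‖·‖_m, (m, false) ↦ p_m)
such that the solution x satisfies sup_{[0,kτ₁]} |x| ≤ C_k · max{q(φ) : q ∈ Λ}. -/
theorem solution_seminorm_estimate (a : ℝ) (b τ : ℕ → ℝ) (n : ℕ → ℕ)
    (hτ : StrictMono τ) (hτpos : ∀ i, 0 < τ i)
    (hτtop : Tendsto τ atTop atTop) (hn : nSpec τ n)
    (φ : ℝ → ℝ) (hφ : memF b τ n φ)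
    (x : ℝ → ℝ) (hx : IsSolution a b τ φ x) (k : ℕ) :
    ∃ C : ℝ, 0 ≤ C ∧ ∃ (Λ : Finset (ℕ × Bool)) (hΛ : Λ.Nonempty),
      ∀ s ∈ Set.Icc (0:ℝ) ((k : ℝ) * τ 0),
        |x s| ≤ C * Λ.sup' hΛ (fun q =>
          if q.2 then normSemi φ q.1 else pSemi b τ n φ q.1) :=
  solution_seminorm_estimate_general a b τ n hτ hτpos hn φ hφ x hx k
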